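/- Let L be a divisorial principally generated C-lattice lattice domain, let (a_i)_{i∈I} be a nonempty family of elements of L, and let x ≤ ⋀_{i∈I} a_i be a nonzero principal element. Then (x : ⋀_{i∈I} a_i) = ⋁_{i∈I} (x : a_i). -/

import Mathlib

/-- A multiplicative lattice: a complete lattice (bottom `⊥` playing the role of `0`)
which is a commutative monoid whose identity `1` is the top element, and in which
multiplication distributes over arbitrary joins. -/
class MulLattice (L : Type*) extends CompleteLattice L, CommMonoid L where
  one_eq_top : (1 : L) = ⊤
  mul_sSup : ∀ (a : L) (S : Set L), a * sSup S = ⨆ b ∈ S, a * b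

namespace MulLattice

variable {L : Type*} [MulLattice L]

/-- The residual `(y : x) = ⋁ {a | a * x ≤ y}`. -/
def res (y x : L) : L := sSup {a : L | a * x ≤ y}

/-- `x` is meet-principal: `y ⊓ z * x = ((y : x) ⊓ z) * x` for all `y, z`. -/
def IsMeetPrincipal (x : L) : Prop := ∀ y z : L, y ⊓ z * x = (res y x ⊓ z) * x

/-- `x` is join-principal: `y ⊔ (z : x) = ((y * x ⊔ z) : x)` for all `y, z`. -/
def IsJoinPrincipal (x : L) : Prop := ∀ y z : L, y ⊔ res z x = res (y * x ⊔ z) x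

/-- `x` is principal if it is both meet-principal and join-principal. -/
def IsPrincipal (x : L) : Prop := IsMeetPrincipal x ∧ IsJoinPrincipal x

/-- A prime element: a proper element `p` with `x * y ≤ p → x ≤ p ∨ y ≤ p`. -/
def IsPrime (p : L) : Prop := p ≠ 1 ∧ ∀ x y : L, x * y ≤ p → x ≤ p ∨ y ≤ p

/-- A maximal element: an element maximal in `L - {1}`. -/
def IsMaximal (m : L) : Prop := m ≠ 1 ∧ ∀ b : L, m < b → b = 1

end MulLattice

/-- A principally generated C-lattice: a multiplicative lattice in which `1` is compact,
compact elements are closed under multiplication, every element is a join of compact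
elements and every element is a join of principal elements. -/
class PGCLattice (L : Type*) extends MulLattice L where
  top_isCompact : IsCompactElement (⊤ : L)
  compact_mul : ∀ a b : L, IsCompactElement a →
    IsCompactElement b → IsCompactElement (a * b)
  compactly_generated : ∀ a : L,
    a = sSup {c : L | IsCompactElement c ∧ c ≤ a}
  principally_generated : ∀ a : L,
    a = sSup {x : L | MulLattice.IsPrincipal x ∧ x ≤ a}

namespace MulLattice

variable {L : Type*}

/-- A lattice domain: `0 = ⊥` is a prime element. -/
def IsLatticeDomain (L : Type*) [MulLattice L] : Prop := IsPrime (⊥ : L)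

variable [PGCLattice L]

open Classical in
/-- The divisorial (`v`-)closure of `a`: equals `(x : (x : a))` for a nonzero principal
`x ≤ a` when such an `x` exists (in a lattice domain this is independent of the choice
of `x`), and `⊥` otherwise (in particular `vclos ⊥ = ⊥`). -/
noncomputable def vclos (a : L) : L :=
  if h : ∃ x : L, IsPrincipal x ∧ x ≠ ⊥ ∧ x ≤ a then
    res h.choose (res h.choose a)
  else ⊥

/-- `a` is divisorial if `a = a_v`. -/
def IsDivisorial (a : L) : Prop := vclos a = a

/-- `L` is h-local: every nonzero prime is below a unique maximal element and
every nonzero element is below only finitely many maximal elements. -/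
def IsHLocal (L : Type*) [PGCLattice L] : Prop :=
  (∀ r : L, r ≠ ⊥ → IsPrime r → ∃! m : L, IsMaximal m ∧ r ≤ m) ∧
  (∀ b : L, b ≠ ⊥ → {m : L | IsMaximal m ∧ b ≤ m}.Finite)

end MulLattice

open MulLattice

/-!
Put `s = ⋁ᵢ (x : aᵢ)`. Residuation turns joins into meets, so
`(x : s) = ⋀ᵢ (x : (x : aᵢ)) = ⋀ᵢ aᵢ`, each `aᵢ` being divisorial. Hence
`(x : ⋀ᵢ aᵢ) = (x : (x : s)) = s_v = s`, since `s` is divisorial too and `x ≤ s`.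
-/

namespace MulLattice

section Residuation

open Quantale

variable {L : Type*} [MulLattice L]

instance : IsQuantale L where
  mul_sSup_distrib := mul_sSup
  sSup_mul_distrib s y := by simpa only [mul_comm] using mul_sSup y s

lemma le_res_iff {x y z : L} : z ≤ res y x ↔ z * x ≤ y :=
  leftMulResiduation_le_iff_mul_le

lemma res_mul_le (y x : L) : res y x * x ≤ y :=
  le_res_iff.1 le_rfl

lemma le_res_self (x a : L) : x ≤ res x a :=
  le_res_iff.2 <| mul_le_of_le_one_right' <| one_eq_top (L := L) ▸ le_top

lemma res_iSup {ι : Type*} (y : L) (b : ι → L) : res y (⨆ i, b i) = ⨅ i, res y (b i) :=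
  eq_of_forall_le_iff fun z => by
    rw [le_res_iff, mul_iSup_distrib, iSup_le_iff]
    simp only [le_iInf_iff, le_res_iff]

lemma IsMeetPrincipal.res_mul_eq {x y : L} (hx : IsMeetPrincipal x) (hy : y ≤ x) :
    res y x * x = y := by
  have h := hx y 1
  rwa [one_mul, one_eq_top, inf_top_eq, inf_eq_left.2 hy, eq_comm] at h

end Residuation

section Domain

variable {L : Type*} [MulLattice L] (hL : IsLatticeDomain L)
include hL

lemma res_bot_eq_bot {x : L} (hx0 : x ≠ ⊥) : res ⊥ x = ⊥ :=
  le_bot_iff.1 <| (hL.2 _ _ (res_mul_le ⊥ x)).resolve_right (mt le_bot_iff.1 hx0)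

lemma IsJoinPrincipal.res_mul_cancel {x : L} (hx : IsJoinPrincipal x) (hx0 : x ≠ ⊥)
    (y : L) : res (y * x) x = y := by
  simpa [res_bot_eq_bot hL hx0] using (hx y ⊥).symm

lemma IsJoinPrincipal.le_of_mul_le_mul_right {x z w : L} (hx : IsJoinPrincipal x)
    (hx0 : x ≠ ⊥) (h : z * x ≤ w * x) : z ≤ w :=
  hx.res_mul_cancel hL hx0 w ▸ le_res_iff.2 h

/-- Applied twice, this shows that `(p : (p : a))` does not depend on the nonzero principal
`p ≤ a`. -/
lemma res_res_le_res_res {p q a : L} (hp : IsJoinPrincipal p) (hp0 : p ≠ ⊥)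
    (hq : IsPrincipal q) (hq0 : q ≠ ⊥) (hpa : p ≤ a) :
    res p (res p a) ≤ res q (res q a) := by
  set u := res (res q a * p) q
  have hu : res q a * p = u * q :=
    (hq.1.res_mul_eq ((mul_le_mul_right hpa _).trans (res_mul_le q a))).symm
  have hu_le : u ≤ res p a := by
    refine le_res_iff.2 (hq.2.le_of_mul_le_mul_right hL hq0 ?_)
    calc u * a * q = res q a * a * p := by rw [mul_right_comm, ← hu, mul_right_comm]
      _ ≤ q * p := mul_le_mul_left (res_mul_le q a) p
      _ = p * q := mul_comm q p
  refine le_res_iff.2 (hp.le_of_mul_le_mul_right hL hp0 ?_)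
  calc res p (res p a) * res q a * p = res p (res p a) * u * q := by rw [mul_assoc, hu, mul_assoc]
    _ ≤ res p (res p a) * res p a * q := mul_le_mul_left (mul_le_mul_right hu_le _) q
    _ ≤ p * q := mul_le_mul_left (res_mul_le p (res p a)) q
    _ = q * p := mul_comm p q

end Domain

section Divisorial

variable {L : Type*} [PGCLattice L] (hL : IsLatticeDomain L)
include hL

lemma vclos_eq_res_res {x a : L} (hx : IsPrincipal x) (hx0 : x ≠ ⊥) (hxa : x ≤ a) :
    vclos a = res x (res x a) := by
  have hex : ∃ y : L, IsPrincipal y ∧ y ≠ ⊥ ∧ y ≤ a := ⟨x, hx, hx0, hxa⟩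
  obtain ⟨hy, hy0, hya⟩ := hex.choose_spec
  rw [vclos, dif_pos hex]
  exact le_antisymm (res_res_le_res_res hL hy.2 hy0 hx hx0 hya)
    (res_res_le_res_res hL hx.2 hx0 hy hy0 hxa)

lemma IsDivisorial.res_res_eq {x a : L} (ha : IsDivisorial a) (hx : IsPrincipal x)
    (hx0 : x ≠ ⊥) (hxa : x ≤ a) : res x (res x a) = a :=
  (vclos_eq_res_res hL hx hx0 hxa).symm.trans ha

end Divisorial

end MulLattice

theorem stmt11 {L : Type*} [PGCLattice L] (hL : IsLatticeDomain L)
    (hdiv : ∀ a : L, IsDivisorial a)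
    {ι : Type*} [Nonempty ι] (a : ι → L) (x : L)
    (hx0 : x ≠ ⊥) (hx : IsPrincipal x) (hxa : x ≤ ⨅ i, a i) :
    res x (⨅ i, a i) = ⨆ i, res x (a i) := by
  set s := ⨆ i, res x (a i)
  have hxa_i : ∀ i, x ≤ a i := fun i => hxa.trans (iInf_le a i)
  have hxs : x ≤ s := by
    obtain ⟨i⟩ := ‹Nonempty ι›
    exact (le_res_self x (a i)).trans (le_iSup (fun j => res x (a j)) i)
  have hres_s : res x s = ⨅ i, a i := by
    rw [res_iSup]
    exact iInf_congr fun i => (hdiv (a i)).res_res_eq hL hx hx0 (hxa_i i)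
  rw [← hres_s]
  exact (hdiv s).res_res_eq hL hx hx0 hxs
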